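/- arXiv:2410.11930 — 3 statements merged into one kernel-verified Lean document; each statement's English description precedes it below -/
import Mathlib

section
/- An ℓ-group G is hyperarchimedean if and only if G is projectable and G is a Martínez ℓ-group. -/
/-!
Common definitions for lattice-ordered groups (ℓ-groups), written additively.
An ℓ-group is modeled as `[Lattice G] [AddGroup G]` together with the two
`CovariantClass` hypotheses expressing that translation is order-preserving.
-/

/-- The absolute value in an ℓ-group: `|g| = (g ⊔ 0) + ((-g) ⊔ 0)`. -/
def labs {G : Type*} [Lattice G] [AddGroup G] (g : G) : G := (g ⊔ 0) + (-g ⊔ 0)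

/-- A convex ℓ-subgroup of `G`: a subgroup which is a sublattice and is convex. -/
def IsConvexLSubgroup {G : Type*} [Lattice G] [AddGroup G] (H : Set G) : Prop :=
  (0 : G) ∈ H ∧ (∀ a ∈ H, -a ∈ H) ∧ (∀ a ∈ H, ∀ b ∈ H, a + b ∈ H) ∧
  (∀ a ∈ H, ∀ b ∈ H, a ⊔ b ∈ H) ∧ (∀ a ∈ H, ∀ b ∈ H, a ⊓ b ∈ H) ∧
  (∀ a ∈ H, ∀ b ∈ H, ∀ g : G, a ≤ g → g ≤ b → g ∈ H)

/-- The polar `g^⊥ = {h : |h| ⊓ |g| = 0}`. -/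
def polar {G : Type*} [Lattice G] [AddGroup G] (g : G) : Set G :=
  {h : G | labs h ⊓ labs g = 0}

/-- The double polar `g^{⊥⊥} = (g^⊥)^⊥ = {h : ∀ k ∈ g^⊥, |h| ⊓ |k| = 0}`. -/
def biPolar {G : Type*} [Lattice G] [AddGroup G] (g : G) : Set G :=
  {h : G | ∀ k ∈ polar g, labs h ⊓ labs k = 0}

/-- A d-subgroup: a convex ℓ-subgroup containing the double polar of each of its elements. -/
def IsDSubgroup {G : Type*} [Lattice G] [AddGroup G] (H : Set G) : Prop :=
  IsConvexLSubgroup H ∧ ∀ h ∈ H, biPolar h ⊆ H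

/-- A Martínez ℓ-group: every convex ℓ-subgroup is a d-subgroup. -/
def Martinez (G : Type*) [Lattice G] [AddGroup G] : Prop :=
  ∀ H : Set G, IsConvexLSubgroup H → IsDSubgroup H

/-- `G(g)`, the smallest convex ℓ-subgroup of `G` containing `g`. -/
def principalCLS {G : Type*} [Lattice G] [AddGroup G] (g : G) : Set G :=
  {x : G | ∀ H : Set G, IsConvexLSubgroup H → g ∈ H → x ∈ H}

/-- An ℓ-group is archimedean if `a, b ≥ 0` and `n•a ≤ b` for all `n ∈ ℕ` imply `a = 0`. -/
def IsArchimedeanLGroup (G : Type*) [Lattice G] [AddGroup G] : Prop :=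
  ∀ a b : G, 0 ≤ a → 0 ≤ b → (∀ n : ℕ, n • a ≤ b) → a = 0

universe u

/-- `G` is hyperarchimedean: every image of `G` under an ℓ-group homomorphism
(a group homomorphism which is also a lattice homomorphism) is archimedean. -/
def Hyperarchimedean (G : Type u) [Lattice G] [AddGroup G] : Prop :=
  ∀ (H : Type u) [Lattice H] [AddGroup H]
    [CovariantClass H H (· + ·) (· ≤ ·)]
    [CovariantClass H H (Function.swap (· + ·)) (· ≤ ·)],
    ∀ f : G → H, Function.Surjective f →
      (∀ x y : G, f (x + y) = f x + f y) →
      (∀ x y : G, f (x ⊔ y) = f x ⊔ f y) →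
      (∀ x y : G, f (x ⊓ y) = f x ⊓ f y) →
      IsArchimedeanLGroup H

/-- `G` is projectable: `G = g^{⊥⊥} ⊕ g^⊥` (internal direct sum) for every `g`. -/
def Projectable (G : Type*) [Lattice G] [AddGroup G] : Prop :=
  ∀ g : G, (∀ x : G, ∃ a ∈ biPolar g, ∃ b ∈ polar g, x = a + b) ∧
    biPolar g ∩ polar g = {(0 : G)}

set_option linter.unusedSectionVars false
set_option maxHeartbeats 1000000

section Aux
variable {G : Type*} [Lattice G] [AddGroup G]
  [CovariantClass G G (· + ·) (· ≤ ·)]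
  [CovariantClass G G (Function.swap (· + ·)) (· ≤ ·)]

lemma lneg_le {a b : G} (h : a ≤ b) : -b ≤ -a := by
  have h1 : -b + a ≤ 0 := by
    have := add_le_add_left h (-b); simpa using this
  have := add_le_add_right h1 (-a); simpa [add_assoc] using this

lemma labs_def (g : G) : labs g = (g ⊔ 0) + (-g ⊔ 0) := rfl

lemma lpos_eq (g : G) : (g ⊔ 0) = g + (-g ⊔ 0) := by
  rw [add_sup, add_neg_cancel, add_zero, sup_comm]

lemma lpos_inf_lneg (g : G) : (g ⊔ 0) ⊓ (-g ⊔ 0) = 0 := by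
  have h : (g ⊔ 0) ⊓ (-g ⊔ 0) = (g ⊓ 0) + (-g ⊔ 0) := by
    rw [inf_add, lpos_eq g, zero_add]
  have h2 : g ⊓ 0 = -(-g ⊔ 0) := by rw [neg_sup, neg_neg, neg_zero]
  rw [h, h2, neg_add_cancel]

lemma labs_nonneg (g : G) : 0 ≤ labs g := add_nonneg le_sup_right le_sup_right

lemma le_labs (g : G) : g ≤ labs g :=
  le_trans le_sup_left (le_add_of_le_of_nonneg le_rfl le_sup_right)

lemma lneg_le_labs (g : G) : -g ≤ labs g :=
  le_trans le_sup_left (le_add_of_nonneg_of_le le_sup_right le_rfl)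

lemma labs_of_nonneg {g : G} (h : 0 ≤ g) : labs g = g := by
  have h1 : g ⊔ 0 = g := sup_eq_left.mpr h
  have h2 : -g ⊔ 0 = 0 := sup_eq_right.mpr (by simpa using lneg_le h)
  rw [labs_def, h1, h2, add_zero]

lemma labs_zero : labs (0 : G) = 0 := labs_of_nonneg le_rfl

lemma sup_identity (a b : G) : a ⊔ b = a + -(a ⊓ b) + b := by
  rw [neg_inf, add_sup, add_neg_cancel, sup_add, zero_add, neg_add_cancel_right,
    sup_comm]

lemma sup_eq_add_of_disj {u v : G} (huv : u ⊓ v = 0) : u ⊔ v = u + v := by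
  rw [sup_identity, huv, neg_zero, add_zero]

lemma add_comm_of_disj {u v : G} (h : u ⊓ v = 0) : u + v = v + u := by
  have h1 := sup_eq_add_of_disj h
  have h2 := sup_eq_add_of_disj (by rw [inf_comm]; exact h : v ⊓ u = 0)
  rw [← h1, ← h2, sup_comm]

lemma labs_neg (g : G) : labs (-g) = labs g := by
  rw [labs_def, labs_def, neg_neg]
  exact (add_comm_of_disj (by rw [inf_comm]; exact lpos_inf_lneg g))

lemma eq_pos_sub_neg (g : G) : (g ⊔ 0) - (-g ⊔ 0) = g := by
  rw [lpos_eq g, sub_eq_add_neg, add_assoc, add_neg_cancel, add_zero]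

lemma labs_eq_zero {g : G} (h : labs g = 0) : g = 0 := by
  have h1 : g ⊔ 0 ≤ 0 := by
    calc g ⊔ 0 = (g ⊔ 0) + 0 := (add_zero _).symm
    _ ≤ (g ⊔ 0) + (-g ⊔ 0) := add_le_add_right le_sup_right _
    _ = 0 := h
  have h2 : -g ⊔ 0 ≤ 0 := by
    calc -g ⊔ 0 = 0 + (-g ⊔ 0) := (zero_add _).symm
    _ ≤ (g ⊔ 0) + (-g ⊔ 0) := add_le_add_left le_sup_right _
    _ = 0 := h
  have e1 : g ⊔ 0 = 0 := le_antisymm h1 le_sup_right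
  have e2 : -g ⊔ 0 = 0 := le_antisymm h2 le_sup_right
  have := eq_pos_sub_neg g
  rw [e1, e2] at this
  simpa using this.symm

lemma nonneg_of_two {a : G} (h : 0 ≤ a + a) : 0 ≤ a := by
  have h1 : -a ≤ a := by
    have := add_le_add_left h (-a); simpa [add_assoc] using this
  have h2 : -a ⊔ 0 ≤ a ⊔ 0 := sup_le_sup_right h1 0
  have h4 : (-a ⊔ 0) ⊓ (a ⊔ 0) = 0 := by
    have := lpos_inf_lneg (-a); rwa [neg_neg] at this
  have h3 : -a ⊔ 0 = 0 := by rw [← inf_eq_left.mpr h2, h4]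
  have : -a ≤ 0 := le_trans le_sup_left h3.le
  simpa using lneg_le this

lemma labs_eq_sup (g : G) : labs g = g ⊔ -g := by
  have hd : 0 ≤ g ⊔ -g := nonneg_of_two (le_trans (by simp) (add_le_add le_sup_left le_sup_right))
  rw [labs_def, ← sup_eq_add_of_disj (lpos_inf_lneg g), sup_sup_sup_comm, sup_idem]
  exact sup_eq_left.mpr hd

lemma labs_le_of {a c : G} (h1 : a ≤ c) (h2 : -a ≤ c) : labs a ≤ c + c := by
  have hc : 0 ≤ c := nonneg_of_two (by simpa using add_le_add h2 h1)
  have e1 : a ⊔ 0 ≤ c := sup_le h1 hc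
  have e2 : -a ⊔ 0 ≤ c := sup_le h2 hc
  exact add_le_add e1 e2

lemma inf_add_le {x u v : G} (hx : 0 ≤ x) (hu : 0 ≤ u) (hv : 0 ≤ v) :
    x ⊓ (u + v) ≤ (x ⊓ u) + (x ⊓ v) := by
  have hw1 : x ⊓ (u+v) ≤ x := inf_le_left
  have hw2 : x ⊓ (u+v) ≤ u + v := inf_le_right
  have hxv : (0:G) ≤ x ⊓ v := le_inf hx hv
  have k0 : x ⊓ (u+v) + -(x ⊓ v) ≤ x ⊓ (u+v) := by
    have := add_le_add_right (neg_nonpos.mpr hxv) (x ⊓ (u+v)); simpa using this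
  have k1 : x ⊓ (u+v) + -(x ⊓ v) ≤ x := le_trans k0 hw1
  have a1 : -u + (x ⊓ (u+v)) ≤ v := by
    have := add_le_add_left hw2 (-u); simpa [← add_assoc] using this
  have a2 : -u + (x ⊓ (u+v)) ≤ x := by
    have h0 : -u + (x ⊓ (u+v)) ≤ x ⊓ (u+v) := by
      have := add_le_add_left (neg_nonpos.mpr hu) (x ⊓ (u+v)); simpa using this
    exact le_trans h0 hw1
  have a3 : u + (-u + (x ⊓ (u+v))) ≤ u + (x ⊓ v) := add_le_add_right (le_inf a2 a1) u
  have a4 : x ⊓ (u+v) ≤ u + (x ⊓ v) := by simpa [← add_assoc] using a3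
  have k2 : x ⊓ (u+v) + -(x ⊓ v) ≤ u := by
    have := add_le_add_right a4 (-(x ⊓ v)); simpa [add_assoc] using this
  have := add_le_add_left (le_inf k1 k2) (x ⊓ v)
  simpa [add_assoc] using this

lemma nsmul_nonneg' {a : G} (h : 0 ≤ a) (n : ℕ) : 0 ≤ n • a := by
  induction n with
  | zero => simp
  | succ k ih => rw [succ_nsmul]; exact add_nonneg ih h

lemma disj_nsmul {x y : G} (hx : 0 ≤ x) (hy : 0 ≤ y) (h : x ⊓ y = 0) (n : ℕ) :
    x ⊓ (n • y) = 0 := by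
  induction n with
  | zero => simpa using inf_eq_right.mpr hx
  | succ k ih =>
    refine le_antisymm ?_ (le_inf hx (nsmul_nonneg' hy _))
    calc x ⊓ ((k+1) • y) = x ⊓ (k • y + y) := by rw [succ_nsmul]
    _ ≤ (x ⊓ (k • y)) + (x ⊓ y) := inf_add_le hx (nsmul_nonneg' hy k) hy
    _ = 0 := by rw [ih, h, add_zero]

lemma disj_add {x y z : G} (hx : 0 ≤ x) (hy : 0 ≤ y) (hz : 0 ≤ z)
    (h1 : x ⊓ z = 0) (h2 : y ⊓ z = 0) : (x + y) ⊓ z = 0 := by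
  refine le_antisymm ?_ (le_inf (add_nonneg hx hy) hz)
  calc (x + y) ⊓ z ≤ z ⊓ (x + y) := by rw [inf_comm]
  _ ≤ (z ⊓ x) + (z ⊓ y) := inf_add_le hz hx hy
  _ = 0 := by rw [inf_comm z x, inf_comm z y, h1, h2, add_zero]

lemma disj_of_le {x' x z : G} (hx' : 0 ≤ x') (hz : 0 ≤ z) (hle : x' ≤ x)
    (h : x ⊓ z = 0) : x' ⊓ z = 0 :=
  le_antisymm (le_trans (inf_le_inf_right z hle) h.le) (le_inf hx' hz)

end Aux
section Aux2
variable {G : Type*} [Lattice G] [AddGroup G]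
  [CovariantClass G G (· + ·) (· ≤ ·)]
  [CovariantClass G G (Function.swap (· + ·)) (· ≤ ·)]

lemma ladd_cancel_le {a b c : G} (h : a + b ≤ a + c) : b ≤ c := by
  have := add_le_add_left h (-a); simpa using this

lemma conj_add (g x y : G) : (g + x + -g) + (g + y + -g) = g + (x + y) + -g := by
  simp only [add_assoc, neg_add_cancel_left]

lemma conj_neg (g x : G) : g + -x + -g = -(g + x + -g) := by
  simp [neg_add_rev, add_assoc]

lemma conj_sup (g x y : G) : g + (x ⊔ y) + -g = (g + x + -g) ⊔ (g + y + -g) := by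
  rw [add_sup, sup_add]

lemma conj_inf (g x y : G) : g + (x ⊓ y) + -g = (g + x + -g) ⊓ (g + y + -g) := by
  rw [add_inf, inf_add]

lemma conj_mono {x y : G} (g : G) (h : x ≤ y) : g + x + -g ≤ g + y + -g :=
  add_le_add_left (add_le_add_right h g) _

lemma conj_nonneg {x : G} (g : G) (h : 0 ≤ x) : 0 ≤ g + x + -g := by
  have := conj_mono g h; simpa using this

lemma conj_nsmul (g x : G) (n : ℕ) : g + n • x + -g = n • (g + x + -g) := by
  induction n with
  | zero => simp
  | succ k ih => rw [succ_nsmul, succ_nsmul, ← conj_add, ih]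

lemma conj_labs (g x : G) : labs (g + x + -g) = g + labs x + -g := by
  have hneg : -(g + x + -g) = g + -x + -g := (conj_neg g x).symm
  have h1 : labs (g+x+-g) = ((g+x+-g) ⊔ (g+0+-g)) + ((g + -x + -g) ⊔ (g+0+-g)) := by
    rw [labs_def, hneg]; simp
  rw [h1, ← conj_sup, ← conj_sup, conj_add, labs_def]

lemma core_lemma {w g : G} (hw : 0 ≤ w) (h : w ⊓ (g + w + -g) = 0) : w ≤ labs g := by
  -- the conjugate disjointness on the other side
  have h2 : (-g + w + g) ⊓ w = 0 := by
    have e : (-g + w + - -g) ⊓ (-g + (g+w+-g) + - -g) = -g + (w ⊓ (g+w+-g)) + - -g :=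
      (conj_inf (-g) w (g+w+-g)).symm
    rw [h] at e
    simp only [neg_neg] at e
    have e2 : -g + (g+w+-g) + g = w := by simp [add_assoc]
    rw [e2] at e
    simpa using e
  have hy1 : (0:G) ≤ g + w + -g := conj_nonneg g hw
  have hy2 : (0:G) ≤ -g + w + g := by
    have := conj_nonneg (-g) hw; simpa using this
  -- ν = -labs g + w
  have hnu : -labs g + w = (g + w) ⊓ (-g + w) := by
    rw [labs_eq_sup, neg_sup, neg_neg, inf_comm (-g) g, inf_add]
  have claim2 : -labs g + w ≤ (g + w + -g) ⊔ (-g + w + g) := by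
    have b1 : ((g + w) ⊓ (-g + w)) + -g ≤ g + w + -g := add_le_add_left inf_le_left _
    have b2 : ((g + w) ⊓ (-g + w)) + g ≤ -g + w + g := add_le_add_left inf_le_right _
    have b3 : (((g + w) ⊓ (-g + w)) + -g) ⊔ (((g + w) ⊓ (-g + w)) + g)
        ≤ (g + w + -g) ⊔ (-g + w + g) := sup_le_sup b1 b2
    have b4 : ((g + w) ⊓ (-g + w)) + (-g ⊔ g) = (((g + w) ⊓ (-g + w)) + -g) ⊔ (((g + w) ⊓ (-g + w)) + g) := add_sup ..
    have b5 : (g + w) ⊓ (-g + w) ≤ ((g + w) ⊓ (-g + w)) + (-g ⊔ g) := by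
      have h0 : (0:G) ≤ -g ⊔ g := by
        have := labs_nonneg g; rw [labs_eq_sup, sup_comm] at this; exact this
      exact le_add_of_nonneg_right h0
    rw [hnu]
    exact le_trans b5 (le_trans b4.le b3)
  have hr : (-labs g + w) ⊔ 0 ≤ w ⊓ ((g + w + -g) ⊔ (-g + w + g)) := by
    refine le_inf (sup_le ?_ hw) (sup_le claim2 (le_trans hy1 le_sup_left))
    have : -labs g + w ≤ 0 + w := add_le_add_left (neg_nonpos.mpr (labs_nonneg g)) w
    simpa using this
  have hsum : (g + w + -g) ⊔ (-g + w + g) ≤ (g + w + -g) + (-g + w + g) :=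
    sup_le (le_add_of_nonneg_right hy2) (le_add_of_nonneg_left hy1)
  have hz : w ⊓ ((g + w + -g) ⊔ (-g + w + g)) ≤ 0 := by
    calc w ⊓ ((g + w + -g) ⊔ (-g + w + g)) ≤ w ⊓ ((g + w + -g) + (-g + w + g)) :=
          inf_le_inf_left w hsum
    _ ≤ (w ⊓ (g + w + -g)) + (w ⊓ (-g + w + g)) := inf_add_le hw hy1 hy2
    _ = 0 := by rw [h, inf_comm, h2, add_zero]
  have : (-labs g + w) ⊔ 0 ≤ 0 := le_trans hr hz
  have : -labs g + w ≤ 0 := le_trans le_sup_left this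
  have := add_le_add_left this (labs g)
  simpa using this

lemma core_nsmul {w g : G} (harch : IsArchimedeanLGroup G) (hw : 0 ≤ w)
    (h : w ⊓ (g + w + -g) = 0) : w = 0 := by
  apply harch w (labs g) hw (labs_nonneg g)
  intro n
  apply core_lemma (nsmul_nonneg' hw n)
  have hc : (0:G) ≤ g + w + -g := conj_nonneg g hw
  have d1 : w ⊓ (n • (g+w+-g)) = 0 := disj_nsmul hw hc h n
  have d2 : (n • (g+w+-g)) ⊓ (n • w) = 0 :=
    disj_nsmul (nsmul_nonneg' hc n) hw (by rw [inf_comm]; exact d1) n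
  rw [conj_nsmul, inf_comm]
  exact d2

end Aux2
section Seq
variable {G : Type*} [Lattice G] [AddGroup G]
  [CovariantClass G G (· + ·) (· ≤ ·)]
  [CovariantClass G G (Function.swap (· + ·)) (· ≤ ·)]

/-- `pseq a b n = b ⊓ n • a`. -/
def pseq (a b : G) (n : ℕ) : G := b ⊓ (n • a)

/-- `sseq a b n = a ⊓ (-(b ⊓ n•a) + b)`. -/
def sseq (a b : G) (n : ℕ) : G := a ⊓ (-(pseq a b n) + b)

/-- successive differences of the `sseq`. -/
def tseq (a b : G) (n : ℕ) : G := -(sseq a b (n+1)) + sseq a b n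

variable {a b : G}

lemma pseq_zero (hb : 0 ≤ b) : pseq a b 0 = 0 := by
  simp only [pseq, zero_smul]
  exact inf_eq_right.mpr hb

lemma pseq_le_b (n : ℕ) : pseq a b n ≤ b := inf_le_left

lemma pseq_mono (ha : 0 ≤ a) (n : ℕ) : pseq a b n ≤ pseq a b (n+1) := by
  refine inf_le_inf_left b ?_
  rw [succ_nsmul]
  exact le_add_of_nonneg_right ha

lemma rseq_nonneg (n : ℕ) : 0 ≤ -(pseq a b n) + b := by
  have := add_le_add_left (pseq_le_b n : pseq a b n ≤ b) (-(pseq a b n))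
  simpa using this

lemma sseq_nonneg (ha : 0 ≤ a) (n : ℕ) : 0 ≤ sseq a b n := le_inf ha (rseq_nonneg n)

lemma sseq_le_a (n : ℕ) : sseq a b n ≤ a := inf_le_left

lemma sseq_antitone (ha : 0 ≤ a) (n : ℕ) : sseq a b (n+1) ≤ sseq a b n := by
  refine inf_le_inf_left a ?_
  exact add_le_add_left (lneg_le (pseq_mono ha n)) b

lemma sseq_le_of_le (ha : 0 ≤ a) {m n : ℕ} (h : m ≤ n) : sseq a b n ≤ sseq a b m := by
  induction n with
  | zero => simp [Nat.le_zero.mp h]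
  | succ k ih =>
    rcases Nat.lt_or_ge m (k+1) with h1 | h2
    · exact le_trans (sseq_antitone ha k) (ih (Nat.lt_succ_iff.mp h1))
    · have : m = k + 1 := le_antisymm h h2
      rw [this]

lemma pseq_add_sseq (ha : 0 ≤ a) (n : ℕ) :
    pseq a b n + sseq a b n = pseq a b (n+1) := by
  have e1 : pseq a b n + sseq a b n = (pseq a b n + a) ⊓ b := by
    rw [sseq, add_inf, add_neg_cancel_left]
  have e2 : pseq a b n + a = (b + a) ⊓ ((n+1) • a) := by
    rw [pseq, inf_add, succ_nsmul]
  rw [e1, e2]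
  show ((b + a) ⊓ ((n+1) • a)) ⊓ b = b ⊓ ((n+1) • a)
  apply le_antisymm
  · exact le_inf inf_le_right (le_trans inf_le_left inf_le_right)
  · exact le_inf (le_inf (le_trans inf_le_left (le_add_of_nonneg_right ha)) inf_le_right)
      inf_le_left

lemma nsmul_sseq_le_pseq (ha : 0 ≤ a) (hb : 0 ≤ b) {k n : ℕ} (h : k ≤ n) :
    k • sseq a b n ≤ pseq a b k := by
  induction k with
  | zero => simp [pseq_zero hb]
  | succ j ih =>
    have hj : j ≤ n := Nat.le_of_succ_le h
    calc (j+1) • sseq a b n = j • sseq a b n + sseq a b n := succ_nsmul _ j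
    _ ≤ pseq a b j + sseq a b n := add_le_add_left (ih hj) _
    _ ≤ pseq a b j + sseq a b j := add_le_add_right (sseq_le_of_le ha hj) _
    _ = pseq a b (j+1) := pseq_add_sseq ha j

lemma nsmul_sseq_le_b (ha : 0 ≤ a) (hb : 0 ≤ b) (n : ℕ) : n • sseq a b n ≤ b :=
  le_trans (nsmul_sseq_le_pseq ha hb le_rfl) (pseq_le_b n)

lemma tseq_nonneg (ha : 0 ≤ a) (n : ℕ) : 0 ≤ tseq a b n := by
  have h := add_le_add_left (sseq_antitone ha n (b := b)) (-(sseq a b (n+1)))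
  simpa [tseq] using h

lemma sseq_add_tseq (n : ℕ) : sseq a b (n+1) + tseq a b n = sseq a b n := by
  rw [tseq, add_neg_cancel_left]

lemma tseq_inf_sseq (ha : 0 ≤ a) (hb : 0 ≤ b) (n : ℕ) :
    tseq a b n ⊓ sseq a b (n+2) = 0 := by
  have key : sseq a b n ⊓ (sseq a b (n+1) + sseq a b (n+2)) ≤ sseq a b (n+1) := by
    apply ladd_cancel_le (a := pseq a b (n+1))
    rw [add_inf]
    have c1 : pseq a b (n+1) + sseq a b n ≤ (b + a) ⊓ ((n+1) • a + a) := by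
      have h1 : pseq a b (n+1) + sseq a b n ≤ pseq a b (n+1) + a :=
        add_le_add_right (sseq_le_a n) _
      refine le_trans h1 ?_
      rw [pseq, inf_add, succ_nsmul]
    have c2 : pseq a b (n+1) + (sseq a b (n+1) + sseq a b (n+2)) ≤ b := by
      rw [← add_assoc, pseq_add_sseq ha (n+1)]
      have h2 : pseq a b (n+1+1) + sseq a b (n+1+1) = pseq a b (n+1+1+1) :=
        pseq_add_sseq ha (n+1+1)
      have h3 : (n+2 : ℕ) = n+1+1 := rfl
      rw [h3, h2]
      exact pseq_le_b _
    have h4 : (pseq a b (n+1) + sseq a b n)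
          ⊓ (pseq a b (n+1) + (sseq a b (n+1) + sseq a b (n+2)))
        ≤ ((b + a) ⊓ ((n+1) • a + a)) ⊓ b := inf_le_inf c1 c2
    refine le_trans h4 ?_
    rw [pseq_add_sseq ha (n+1)]
    have h5 : pseq a b (n+1+1) = b ⊓ ((n+1) • a + a) := by
      rw [pseq, succ_nsmul]
    rw [show (n+1+1 : ℕ) = n+2 from rfl] at h5
    rw [h5]
    exact le_inf inf_le_right (le_trans inf_le_left inf_le_right)
  have expand : sseq a b (n+1) + (tseq a b n ⊓ sseq a b (n+2))
      = sseq a b n ⊓ (sseq a b (n+1) + sseq a b (n+2)) := by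
    rw [add_inf, sseq_add_tseq]
  have le0 : sseq a b (n+1) + (tseq a b n ⊓ sseq a b (n+2)) ≤ sseq a b (n+1) + 0 := by
    rw [expand, add_zero]; exact key
  have ge0 : sseq a b (n+1) + 0 ≤ sseq a b (n+1) + (tseq a b n ⊓ sseq a b (n+2)) :=
    add_le_add_right (le_inf (tseq_nonneg ha n) (sseq_nonneg ha (n+2))) _
  exact add_left_cancel (le_antisymm le0 ge0)

lemma sseq_inf_tseq (ha : 0 ≤ a) (hb : 0 ≤ b) {m n : ℕ} (h : n + 2 ≤ m) :
    sseq a b m ⊓ tseq a b n = 0 := by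
  have h0 : sseq a b (n+2) ⊓ tseq a b n = 0 := by
    rw [inf_comm]; exact tseq_inf_sseq ha hb n
  exact disj_of_le (sseq_nonneg ha m) (tseq_nonneg ha n) (sseq_le_of_le ha h) h0

end Seq
section Lists
variable {G : Type*} [Lattice G] [AddGroup G]
  [CovariantClass G G (· + ·) (· ≤ ·)]
  [CovariantClass G G (Function.swap (· + ·)) (· ≤ ·)]

lemma list_sum_nonneg : ∀ (l : List G), (∀ x ∈ l, 0 ≤ x) → 0 ≤ l.sum
  | [], _ => by simp
  | c :: t, h => by
    rw [List.sum_cons]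
    exact add_nonneg (h c (List.mem_cons_self))
      (list_sum_nonneg t fun x hx => h x (List.mem_cons_of_mem c hx))

lemma listZ {x : G} (hx : 0 ≤ x) : ∀ (l : List G), (∀ c ∈ l, 0 ≤ c) →
    (∀ c ∈ l, x ⊓ c = 0) → x ≤ l.sum → x = 0
  | [], _, _, hle => le_antisymm (by simpa using hle) hx
  | c :: t, hpos, hdisj, hle => by
    have hc : 0 ≤ c := hpos c (List.mem_cons_self)
    have ht : 0 ≤ t.sum := list_sum_nonneg t fun y hy => hpos y (List.mem_cons_of_mem c hy)
    have h1 : x ≤ (x ⊓ c) + (x ⊓ t.sum) := by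
      have e : x = x ⊓ (c + t.sum) := (inf_eq_left.mpr (by simpa using hle)).symm
      calc x = x ⊓ (c + t.sum) := e
      _ ≤ (x ⊓ c) + (x ⊓ t.sum) := inf_add_le hx hc ht
    rw [hdisj c (List.mem_cons_self), zero_add] at h1
    have h2 : x ≤ t.sum := le_trans h1 inf_le_right
    exact listZ hx t (fun y hy => hpos y (List.mem_cons_of_mem c hy))
      (fun y hy => hdisj y (List.mem_cons_of_mem c hy)) h2

/-- fold of conjugates of `w` intersected together, starting from `w`. -/
def cfold (w : G) (l : List G) : G := l.foldr (fun g acc => (g + w + -g) ⊓ acc) w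

lemma cfold_nil (w : G) : cfold w [] = w := rfl

lemma cfold_cons (w g : G) (l : List G) :
    cfold w (g :: l) = (g + w + -g) ⊓ cfold w l := rfl

lemma cfold_le_w (w : G) : ∀ l : List G, cfold w l ≤ w
  | [] => le_rfl
  | g :: t => le_trans inf_le_right (cfold_le_w w t)

lemma cfold_nonneg {w : G} (hw : 0 ≤ w) : ∀ l : List G, 0 ≤ cfold w l
  | [] => hw
  | g :: t => le_inf (conj_nonneg g hw) (cfold_nonneg hw t)

lemma cfold_le_conj (w : G) : ∀ (l : List G), ∀ g ∈ l, cfold w l ≤ g + w + -g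
  | g' :: t, g, hg => by
    rcases List.mem_cons.mp hg with h | h
    · rw [h, cfold_cons]; exact inf_le_left
    · exact le_trans (inf_le_right) (cfold_le_conj w t g h)

lemma cfold_zero {w : G} (harch : IsArchimedeanLGroup G) (hw : 0 ≤ w) :
    ∀ l : List G, cfold w l = 0 → w = 0
  | [] , h => h
  | g :: t, h => by
    rw [cfold_cons] at h
    have hF : 0 ≤ cfold w t := cfold_nonneg hw t
    have hFw : cfold w t ≤ w := cfold_le_w w t
    have hd : cfold w t ⊓ (g + cfold w t + -g) = 0 := by
      refine le_antisymm ?_ (le_inf hF (conj_nonneg g hF))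
      calc cfold w t ⊓ (g + cfold w t + -g) ≤ cfold w t ⊓ (g + w + -g) :=
            inf_le_inf_left _ (conj_mono g hFw)
      _ = (g + w + -g) ⊓ cfold w t := inf_comm ..
      _ = 0 := h
    have hF0 : cfold w t = 0 := core_nsmul harch hF hd
    exact cfold_zero harch hw t hF0

end Lists
section Cert
variable {G : Type*} [Lattice G] [AddGroup G]
  [CovariantClass G G (· + ·) (· ≤ ·)]
  [CovariantClass G G (Function.swap (· + ·)) (· ≤ ·)]

/-- Sum of conjugated generators `tseq`. -/
def certSum (a b : G) (l : List (ℕ × G)) : G :=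
  (l.map fun q => q.2 + tseq a b q.1 + -q.2).sum

lemma certSum_append (a b : G) (l1 l2 : List (ℕ × G)) :
    certSum a b (l1 ++ l2) = certSum a b l1 + certSum a b l2 := by
  rw [certSum, List.map_append, List.sum_append]; rfl

lemma certSum_nonneg {a : G} (b : G) (ha : 0 ≤ a) (l : List (ℕ × G)) :
    0 ≤ certSum a b l := by
  apply list_sum_nonneg
  intro x hx
  rcases List.mem_map.mp hx with ⟨q, _, rfl⟩
  exact conj_nonneg _ (tseq_nonneg ha q.1)

lemma conj_list_sum (g : G) : ∀ l : List G,
    g + l.sum + -g = (l.map fun x => g + x + -g).sum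
  | [] => by simp
  | x :: t => by
    rw [List.sum_cons, List.map_cons, List.sum_cons, ← conj_list_sum g t, ← conj_add]

lemma certSum_conj (a b g : G) (l : List (ℕ × G)) :
    g + certSum a b l + -g = certSum a b (l.map fun q => (q.1, g + q.2)) := by
  rw [certSum, conj_list_sum, certSum, List.map_map, List.map_map]
  congr 1
  apply List.map_congr_left
  intro q _
  simp only [Function.comp_apply, neg_add_rev, add_assoc]

/-- The ℓ-ideal generated by the `tseq a b n`. -/
def certIdeal (a b : G) (ha : 0 ≤ a) : AddSubgroup G where
  carrier := {z | ∃ l : List (ℕ × G), labs z ≤ certSum a b l}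
  zero_mem' := ⟨[], by rw [labs_zero]; exact le_rfl⟩
  neg_mem' := by rintro z ⟨l, hl⟩; exact ⟨l, by rwa [labs_neg]⟩
  add_mem' := by
    rintro z1 z2 ⟨l1, h1⟩ ⟨l2, h2⟩
    refine ⟨(l1 ++ l2 ++ l1) ++ (l1 ++ l2 ++ l1), ?_⟩
    rw [certSum_append]
    have b1 : labs z1 ≤ certSum a b l1 := h1
    have b2 : labs z2 ≤ certSum a b l2 := h2
    have hC : z1 + z2 ≤ certSum a b (l1 ++ l2 ++ l1) := by
      rw [certSum_append, certSum_append]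
      exact le_trans (le_trans (add_le_add (le_trans (le_labs z1) b1)
        (le_trans (le_labs z2) b2)) (le_add_of_nonneg_right (certSum_nonneg b ha l1))) le_rfl
    have hC2 : -(z1 + z2) ≤ certSum a b (l1 ++ l2 ++ l1) := by
      rw [certSum_append, certSum_append, add_assoc]
      rw [neg_add_rev]
      exact le_trans (add_le_add (le_trans (lneg_le_labs z2) b2)
        (le_trans (lneg_le_labs z1) b1)) (le_add_of_nonneg_left (certSum_nonneg b ha l1))
    exact labs_le_of hC hC2

lemma certIdeal_normal (a b : G) (ha : 0 ≤ a) : (certIdeal a b ha).Normal := by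
  constructor
  rintro z ⟨l, hl⟩ g
  refine ⟨l.map fun q => (q.1, g + q.2), ?_⟩
  rw [← certSum_conj, conj_labs]
  exact conj_mono g hl

lemma certIdeal_sup (a b : G) (ha : 0 ≤ a) {x y : G}
    (hx : x ∈ certIdeal a b ha) (hy : y ∈ certIdeal a b ha) :
    x ⊔ y ∈ certIdeal a b ha := by
  rcases hx with ⟨l1, h1⟩; rcases hy with ⟨l2, h2⟩
  refine ⟨(l1 ++ l2) ++ (l1 ++ l2), ?_⟩
  rw [certSum_append]
  have hCx : labs x ≤ certSum a b (l1 ++ l2) := by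
    rw [certSum_append]
    exact le_trans h1 (le_add_of_nonneg_right (certSum_nonneg b ha l2))
  have hCy : labs y ≤ certSum a b (l1 ++ l2) := by
    rw [certSum_append]
    exact le_trans h2 (le_add_of_nonneg_left (certSum_nonneg b ha l1))
  have u1 : x ⊔ y ≤ certSum a b (l1 ++ l2) :=
    sup_le (le_trans (le_labs x) hCx) (le_trans (le_labs y) hCy)
  have u2 : -(x ⊔ y) ≤ certSum a b (l1 ++ l2) := by
    rw [neg_sup]
    exact le_trans inf_le_left (le_trans (lneg_le_labs x) hCx)
  exact labs_le_of u1 u2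

lemma certIdeal_conv (a b : G) (ha : 0 ≤ a) {x y z : G}
    (hx : x ∈ certIdeal a b ha) (hy : y ∈ certIdeal a b ha)
    (h1 : x ≤ z) (h2 : z ≤ y) : z ∈ certIdeal a b ha := by
  rcases hx with ⟨l1, hl1⟩; rcases hy with ⟨l2, hl2⟩
  refine ⟨(l1 ++ l2) ++ (l1 ++ l2), ?_⟩
  rw [certSum_append]
  have u1 : z ≤ certSum a b (l1 ++ l2) := by
    rw [certSum_append]
    exact le_trans (le_trans h2 (le_labs y))
      (le_trans hl2 (le_add_of_nonneg_left (certSum_nonneg b ha l1)))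
  have u2 : -z ≤ certSum a b (l1 ++ l2) := by
    rw [certSum_append]
    exact le_trans (le_trans (lneg_le h1) (lneg_le_labs x))
      (le_trans hl1 (le_add_of_nonneg_right (certSum_nonneg b ha l2)))
  exact labs_le_of u1 u2

lemma tseq_mem_certIdeal (a b : G) (ha : 0 ≤ a) (n : ℕ) :
    tseq a b n ∈ certIdeal a b ha := by
  refine ⟨[(n, 0)], ?_⟩
  rw [labs_of_nonneg (tseq_nonneg ha n)]
  simp [certSum]

end Cert
section Quot
variable {G : Type*} [Lattice G] [AddGroup G]
  [CovariantClass G G (· + ·) (· ≤ ·)]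
  [CovariantClass G G (Function.swap (· + ·)) (· ≤ ·)]

lemma lcancel_le {x y c : G} (h : x ≤ y + c) : -y + x ≤ c := by
  have := add_le_add_right h (-y)
  rwa [← add_assoc, neg_add_cancel, zero_add] at this

lemma mem_of_between (L : AddSubgroup G)
    (hconv : ∀ x ∈ L, ∀ y ∈ L, ∀ z : G, x ≤ z → z ≤ y → z ∈ L)
    {x y c c' : G} (hc : c ∈ L) (hc' : c' ∈ L)
    (h1 : x ≤ y + c) (h2 : y ≤ x + c') : -y + x ∈ L := by
  have w1 : -y + x ≤ c := lcancel_le h1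
  have w2 : -c' ≤ -y + x := by
    have h3 : -x + y ≤ c' := lcancel_le h2
    have h4 := lneg_le h3
    have h5 : -(-x + y) = -y + x := by rw [neg_add_rev, neg_neg]
    rwa [h5] at h4
  exact hconv _ (neg_mem hc') _ hc _ w2 w1

variable (L : AddSubgroup G) [hN : L.Normal]

/-- The induced order relation on the quotient. -/
def qle (x y : G ⧸ L) : Prop :=
  Quotient.liftOn₂' x y (fun a b => ∃ l ∈ L, a ≤ b + l) <| by
    have key : ∀ a₁ b₁ a₂ b₂ : G, -a₁ + a₂ ∈ L → -b₁ + b₂ ∈ L →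
        (∃ l ∈ L, a₁ ≤ b₁ + l) → ∃ l ∈ L, a₂ ≤ b₂ + l := by
      rintro a₁ b₁ a₂ b₂ hla hlb ⟨l, hl, hle⟩
      refine ⟨-(-b₁ + b₂) + l + (-a₁ + a₂),
        add_mem (add_mem (neg_mem hlb) hl) hla, ?_⟩
      have e1 : a₂ = a₁ + (-a₁ + a₂) := by rw [add_neg_cancel_left]
      have e2 : b₁ = b₂ + -(-b₁ + b₂) := by rw [neg_add_rev, neg_neg, add_neg_cancel_left]
      calc a₂ = a₁ + (-a₁ + a₂) := e1
      _ ≤ (b₁ + l) + (-a₁ + a₂) := add_le_add_left hle _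
      _ = b₂ + (-(-b₁ + b₂) + l + (-a₁ + a₂)) := by
          conv_lhs => rw [e2]
          simp only [add_assoc]
    intro a₁ a₂ b₁ b₂ h1 h2
    have h1' : -a₁ + b₁ ∈ L := QuotientAddGroup.leftRel_apply.mp h1
    have h2' : -a₂ + b₂ ∈ L := QuotientAddGroup.leftRel_apply.mp h2
    have h1'' : -b₁ + a₁ ∈ L := by
      have := neg_mem h1'; rwa [neg_add_rev, neg_neg] at this
    have h2'' : -b₂ + a₂ ∈ L := by
      have := neg_mem h2'; rwa [neg_add_rev, neg_neg] at this
    exact propext ⟨key a₁ a₂ b₁ b₂ h1' h2', key b₁ b₂ a₁ a₂ h1'' h2''⟩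

lemma qle_mk {x y : G} :
    qle L (QuotientAddGroup.mk x) (QuotientAddGroup.mk y) ↔ ∃ l ∈ L, x ≤ y + l :=
  Iff.rfl

/-- The lattice structure on the quotient. -/
def qlattice (hsup : ∀ x ∈ L, ∀ y ∈ L, x ⊔ y ∈ L)
    (hconv : ∀ x ∈ L, ∀ y ∈ L, ∀ z : G, x ≤ z → z ≤ y → z ∈ L) :
    Lattice (G ⧸ L) where
  le := qle L
  le_refl := fun x => Quotient.inductionOn' x fun a => ⟨0, L.zero_mem, by simp⟩
  le_trans := fun x y z => Quotient.inductionOn₃' x y z fun a b c h1 h2 => by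
    rcases h1 with ⟨l1, hl1, e1⟩
    rcases h2 with ⟨l2, hl2, e2⟩
    refine ⟨l2 + l1, add_mem hl2 hl1, ?_⟩
    calc a ≤ b + l1 := e1
    _ ≤ (c + l2) + l1 := add_le_add_left e2 _
    _ = c + (l2 + l1) := add_assoc ..
  le_antisymm := fun x y => Quotient.inductionOn₂' x y fun a b h1 h2 => by
    rcases h1 with ⟨l1, hl1, e1⟩
    rcases h2 with ⟨l2, hl2, e2⟩
    apply Quotient.sound'
    rw [QuotientAddGroup.leftRel_apply]
    exact mem_of_between L hconv hl2 hl1 e2 e1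
  sup := fun x y => Quotient.liftOn₂' x y
    (fun a b => (QuotientAddGroup.mk (a ⊔ b) : G ⧸ L)) <| by
    intro a₁ a₂ b₁ b₂ h1 h2
    have h1' : -a₁ + b₁ ∈ L := QuotientAddGroup.leftRel_apply.mp h1
    have h2' : -a₂ + b₂ ∈ L := QuotientAddGroup.leftRel_apply.mp h2
    apply Quotient.sound'
    rw [QuotientAddGroup.leftRel_apply]
    have hcmem : (-a₁ + b₁) ⊔ (-a₂ + b₂) ⊔ 0 ∈ L :=
      hsup _ (hsup _ h1' _ h2') _ L.zero_mem
    have hcmem' : (-(-a₁ + b₁)) ⊔ (-(-a₂ + b₂)) ⊔ 0 ∈ L :=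
      hsup _ (hsup _ (neg_mem h1') _ (neg_mem h2')) _ L.zero_mem
    refine mem_of_between L hconv hcmem hcmem' ?_ ?_
    · refine sup_le ?_ ?_
      · have e1 : b₁ = a₁ + (-a₁ + b₁) := by rw [add_neg_cancel_left]
        calc b₁ = a₁ + (-a₁ + b₁) := e1
        _ ≤ (a₁ ⊔ a₂) + ((-a₁ + b₁) ⊔ (-a₂ + b₂) ⊔ 0) :=
            add_le_add le_sup_left (le_trans le_sup_left le_sup_left)
      · have e2 : b₂ = a₂ + (-a₂ + b₂) := by rw [add_neg_cancel_left]
        calc b₂ = a₂ + (-a₂ + b₂) := e2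
        _ ≤ (a₁ ⊔ a₂) + ((-a₁ + b₁) ⊔ (-a₂ + b₂) ⊔ 0) :=
            add_le_add le_sup_right (le_trans le_sup_right le_sup_left)
    · refine sup_le ?_ ?_
      · have e1 : a₁ = b₁ + -(-a₁ + b₁) := by
          rw [neg_add_rev, neg_neg, add_neg_cancel_left]
        calc a₁ = b₁ + -(-a₁ + b₁) := e1
        _ ≤ (b₁ ⊔ b₂) + ((-(-a₁ + b₁)) ⊔ (-(-a₂ + b₂)) ⊔ 0) :=
            add_le_add le_sup_left (le_trans le_sup_left le_sup_left)
      · have e2 : a₂ = b₂ + -(-a₂ + b₂) := by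
          rw [neg_add_rev, neg_neg, add_neg_cancel_left]
        calc a₂ = b₂ + -(-a₂ + b₂) := e2
        _ ≤ (b₁ ⊔ b₂) + ((-(-a₁ + b₁)) ⊔ (-(-a₂ + b₂)) ⊔ 0) :=
            add_le_add le_sup_right (le_trans le_sup_right le_sup_left)
  le_sup_left := fun x y => Quotient.inductionOn₂' x y fun a b =>
    ⟨0, L.zero_mem, by simp⟩
  le_sup_right := fun x y => Quotient.inductionOn₂' x y fun a b =>
    ⟨0, L.zero_mem, by simp⟩
  sup_le := fun x y z => Quotient.inductionOn₃' x y z fun a b c h1 h2 => by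
    rcases h1 with ⟨l1, hl1, e1⟩
    rcases h2 with ⟨l2, hl2, e2⟩
    refine ⟨l1 ⊔ l2, hsup _ hl1 _ hl2, ?_⟩
    rw [add_sup]
    exact sup_le (le_trans e1 le_sup_left) (le_trans e2 le_sup_right)
  inf := fun x y => Quotient.liftOn₂' x y
    (fun a b => (QuotientAddGroup.mk (a ⊓ b) : G ⧸ L)) <| by
    intro a₁ a₂ b₁ b₂ h1 h2
    have h1' : -a₁ + b₁ ∈ L := QuotientAddGroup.leftRel_apply.mp h1
    have h2' : -a₂ + b₂ ∈ L := QuotientAddGroup.leftRel_apply.mp h2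
    apply Quotient.sound'
    rw [QuotientAddGroup.leftRel_apply]
    have hcmem : (-a₁ + b₁) ⊔ (-a₂ + b₂) ⊔ 0 ∈ L :=
      hsup _ (hsup _ h1' _ h2') _ L.zero_mem
    have hcmem' : (-(-a₁ + b₁)) ⊔ (-(-a₂ + b₂)) ⊔ 0 ∈ L :=
      hsup _ (hsup _ (neg_mem h1') _ (neg_mem h2')) _ L.zero_mem
    refine mem_of_between L hconv hcmem hcmem' ?_ ?_
    · rw [inf_add]
      refine le_inf (le_trans inf_le_left ?_) (le_trans inf_le_right ?_)
      · have e1 : b₁ = a₁ + (-a₁ + b₁) := by rw [add_neg_cancel_left]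
        calc b₁ = a₁ + (-a₁ + b₁) := e1
        _ ≤ a₁ + ((-a₁ + b₁) ⊔ (-a₂ + b₂) ⊔ 0) :=
            add_le_add_right (le_trans le_sup_left le_sup_left) a₁
      · have e2 : b₂ = a₂ + (-a₂ + b₂) := by rw [add_neg_cancel_left]
        calc b₂ = a₂ + (-a₂ + b₂) := e2
        _ ≤ a₂ + ((-a₁ + b₁) ⊔ (-a₂ + b₂) ⊔ 0) :=
            add_le_add_right (le_trans le_sup_right le_sup_left) a₂
    · rw [inf_add]
      refine le_inf (le_trans inf_le_left ?_) (le_trans inf_le_right ?_)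
      · have e1 : a₁ = b₁ + -(-a₁ + b₁) := by
          rw [neg_add_rev, neg_neg, add_neg_cancel_left]
        calc a₁ = b₁ + -(-a₁ + b₁) := e1
        _ ≤ b₁ + ((-(-a₁ + b₁)) ⊔ (-(-a₂ + b₂)) ⊔ 0) :=
            add_le_add_right (le_trans le_sup_left le_sup_left) b₁
      · have e2 : a₂ = b₂ + -(-a₂ + b₂) := by
          rw [neg_add_rev, neg_neg, add_neg_cancel_left]
        calc a₂ = b₂ + -(-a₂ + b₂) := e2
        _ ≤ b₂ + ((-(-a₁ + b₁)) ⊔ (-(-a₂ + b₂)) ⊔ 0) :=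
            add_le_add_right (le_trans le_sup_right le_sup_left) b₂
  inf_le_left := fun x y => Quotient.inductionOn₂' x y fun a b =>
    ⟨0, L.zero_mem, by simp⟩
  inf_le_right := fun x y => Quotient.inductionOn₂' x y fun a b =>
    ⟨0, L.zero_mem, by simp⟩
  le_inf := fun x y z => Quotient.inductionOn₃' x y z fun a b c h1 h2 => by
    rcases h1 with ⟨l1, hl1, e1⟩
    rcases h2 with ⟨l2, hl2, e2⟩
    refine ⟨l1 ⊔ l2, hsup _ hl1 _ hl2, ?_⟩
    rw [inf_add]
    exact le_inf (le_trans e1 (add_le_add_right le_sup_left b))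
      (le_trans e2 (add_le_add_right le_sup_right c))

end Quot
section QuotArch
universe v
variable {G : Type v} [Lattice G] [AddGroup G]
  [CovariantClass G G (· + ·) (· ≤ ·)]
  [CovariantClass G G (Function.swap (· + ·)) (· ≤ ·)]

lemma quot_arch (L : AddSubgroup G) [hN : L.Normal]
    (hsup : ∀ x ∈ L, ∀ y ∈ L, x ⊔ y ∈ L)
    (hconv : ∀ x ∈ L, ∀ y ∈ L, ∀ z : G, x ≤ z → z ≤ y → z ∈ L)
    (hG : Hyperarchimedean G) (s : ℕ → G) (b : G)
    (hs0 : 0 ≤ s 0) (hb : 0 ≤ b)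
    (hchain : ∀ n, -(s (n+1)) + s n ∈ L)
    (hb' : ∀ n, n • (s n) ≤ b) : s 0 ∈ L := by
  letI lat : Lattice (G ⧸ L) := qlattice L hsup hconv
  haveI cov1 : CovariantClass (G ⧸ L) (G ⧸ L) (· + ·) (· ≤ ·) := by
    refine ⟨fun c {x y} h => ?_⟩
    revert h
    refine Quotient.inductionOn₃' c x y ?_
    intro cc aa bb h
    rcases h with ⟨l, hl, e⟩
    show ∃ l ∈ L, cc + aa ≤ (cc + bb) + l
    refine ⟨l, hl, ?_⟩
    calc cc + aa ≤ cc + (bb + l) := add_le_add_right e cc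
    _ = (cc + bb) + l := (add_assoc ..).symm
  haveI cov2 : CovariantClass (G ⧸ L) (G ⧸ L) (Function.swap (· + ·)) (· ≤ ·) := by
    refine ⟨fun c {x y} h => ?_⟩
    revert h
    refine Quotient.inductionOn₃' c x y ?_
    intro cc aa bb h
    rcases h with ⟨l, hl, e⟩
    show ∃ l ∈ L, aa + cc ≤ (bb + cc) + l
    have hmem : -cc + l + cc ∈ L := by
      have := hN.conj_mem l hl (-cc)
      rwa [neg_neg] at this
    refine ⟨-cc + l + cc, hmem, ?_⟩
    calc aa + cc ≤ (bb + l) + cc := add_le_add_left e cc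
    _ = (bb + cc) + (-cc + l + cc) := by simp only [add_assoc, add_neg_cancel_left, neg_add_cancel_left]
  have harch := hG (G ⧸ L) (QuotientAddGroup.mk) QuotientAddGroup.mk_surjective
    (fun x y => rfl) (fun x y => rfl) (fun x y => rfl)
  have hmkchain : ∀ n, (QuotientAddGroup.mk (s n) : G ⧸ L) = QuotientAddGroup.mk (s 0) := by
    intro n
    induction n with
    | zero => rfl
    | succ k ih => rw [← ih]; exact (QuotientAddGroup.eq).mpr (hchain k)
  have mknsmul : ∀ (x : G) (n : ℕ), (QuotientAddGroup.mk (n • x) : G ⧸ L)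
      = n • QuotientAddGroup.mk x := fun x n => map_nsmul (QuotientAddGroup.mk' L) n x
  have h0 : (0 : G ⧸ L) ≤ QuotientAddGroup.mk (s 0) := by
    show ∃ l ∈ L, (0:G) ≤ s 0 + l
    exact ⟨0, L.zero_mem, by simpa using hs0⟩
  have hb0 : (0 : G ⧸ L) ≤ QuotientAddGroup.mk b := by
    show ∃ l ∈ L, (0:G) ≤ b + l
    exact ⟨0, L.zero_mem, by simpa using hb⟩
  have key : ∀ n : ℕ, n • (QuotientAddGroup.mk (s 0) : G ⧸ L) ≤ QuotientAddGroup.mk b := by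
    intro n
    have e : n • (QuotientAddGroup.mk (s 0) : G ⧸ L) = QuotientAddGroup.mk (n • s n) := by
      rw [← hmkchain n, ← mknsmul]
    rw [e]
    show ∃ l ∈ L, n • s n ≤ b + l
    exact ⟨0, L.zero_mem, by simpa using hb' n⟩
  have hz := harch (QuotientAddGroup.mk (s 0)) (QuotientAddGroup.mk b) h0 hb0 key
  exact (QuotientAddGroup.eq_zero_iff (s 0)).mp hz

end QuotArch
section Stab
variable {G : Type*} [Lattice G] [AddGroup G]
  [CovariantClass G G (· + ·) (· ≤ ·)]
  [CovariantClass G G (Function.swap (· + ·)) (· ≤ ·)]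

lemma le_foldr_max : ∀ (l : List ℕ), ∀ x ∈ l, x ≤ l.foldr max 0
  | c :: t, x, hx => by
    rcases List.mem_cons.mp hx with h | h
    · rw [h, List.foldr_cons]; exact le_max_left _ _
    · exact le_trans (le_foldr_max t x h) (le_max_right _ _)

lemma arch_of_hyper (hG : Hyperarchimedean G) : IsArchimedeanLGroup G :=
  hG G id Function.surjective_id (fun _ _ => rfl) (fun _ _ => rfl) (fun _ _ => rfl)

lemma stab (hG : Hyperarchimedean G) {a b : G} (ha : 0 ≤ a) (hb : 0 ≤ b) :
    ∃ n, sseq a b n = 0 := by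
  by_contra hcon
  push_neg at hcon
  have harchG : IsArchimedeanLGroup G := arch_of_hyper hG
  haveI : (certIdeal a b ha).Normal := certIdeal_normal a b ha
  have hs0mem : sseq a b 0 ∈ certIdeal a b ha := by
    apply quot_arch (certIdeal a b ha)
      (fun x hx y hy => certIdeal_sup a b ha hx hy)
      (fun x hx y hy z h1 h2 => certIdeal_conv a b ha hx hy h1 h2)
      hG (sseq a b) b (sseq_nonneg ha 0) hb
      (fun n => tseq_mem_certIdeal a b ha n)
      (fun n => nsmul_sseq_le_b ha hb n)
  rcases hs0mem with ⟨l, hl⟩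
  rw [labs_of_nonneg (sseq_nonneg ha 0)] at hl
  set m := (l.map Prod.fst).foldr max 0 + 2 with hm
  have hmge : ∀ q ∈ l, q.1 + 2 ≤ m := by
    intro q hq
    have h1 : q.1 ≤ (l.map Prod.fst).foldr max 0 :=
      le_foldr_max _ _ (List.mem_map_of_mem (f := Prod.fst) hq)
    omega
  have hxfold : cfold (sseq a b m) (l.map Prod.snd) = 0 := by
    apply listZ (cfold_nonneg (sseq_nonneg ha m) _)
      (l.map fun q => q.2 + tseq a b q.1 + -q.2)
    · intro c hc
      rcases List.mem_map.mp hc with ⟨q, _, rfl⟩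
      exact conj_nonneg _ (tseq_nonneg ha q.1)
    · intro c hc
      rcases List.mem_map.mp hc with ⟨q, hq, rfl⟩
      have h1 : cfold (sseq a b m) (l.map Prod.snd) ≤ q.2 + sseq a b m + -q.2 :=
        cfold_le_conj _ _ q.2 (List.mem_map_of_mem (f := Prod.snd) hq)
      have h2 : (q.2 + sseq a b m + -q.2) ⊓ (q.2 + tseq a b q.1 + -q.2) = 0 := by
        rw [← conj_inf, sseq_inf_tseq ha hb (hmge q hq)]
        simp
      exact disj_of_le (cfold_nonneg (sseq_nonneg ha m) _)
        (conj_nonneg _ (tseq_nonneg ha q.1)) h1 h2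
    · exact le_trans (cfold_le_w _ _) (le_trans (sseq_le_of_le ha (Nat.zero_le m)) hl)
  exact hcon m (cfold_zero harchG (sseq_nonneg ha m) (l.map Prod.snd) hxfold)

end Stab
section Polar
variable {G : Type*} [Lattice G] [AddGroup G]
  [CovariantClass G G (· + ·) (· ≤ ·)]
  [CovariantClass G G (Function.swap (· + ·)) (· ≤ ·)]

lemma labs_add_le (x y : G) :
    labs (x + y) ≤ (labs x + labs y + labs x) + (labs x + labs y + labs x) := by
  apply labs_le_of
  · exact le_trans (add_le_add (le_labs x) (le_labs y))
      (le_add_of_nonneg_right (labs_nonneg x))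
  · rw [neg_add_rev]
    have h1 : -y + -x ≤ labs y + labs x := add_le_add (lneg_le_labs y) (lneg_le_labs x)
    have h2 : labs y + labs x ≤ labs x + (labs y + labs x) :=
      le_add_of_nonneg_left (labs_nonneg x)
    rw [← add_assoc] at h2
    exact le_trans h1 h2

lemma zero_mem_polar (g : G) : (0:G) ∈ polar g := by
  show labs (0:G) ⊓ labs g = 0
  rw [labs_zero]
  exact inf_eq_left.mpr (labs_nonneg g)

lemma polar_neg_mem {g x : G} (hx : x ∈ polar g) : -x ∈ polar g := by
  show labs (-x) ⊓ labs g = 0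
  rw [labs_neg]
  exact hx

lemma polar_add_mem {g x y : G} (hx : x ∈ polar g) (hy : y ∈ polar g) :
    x + y ∈ polar g := by
  show labs (x + y) ⊓ labs g = 0
  have hx' : labs x ⊓ labs g = 0 := hx
  have hy' : labs y ⊓ labs g = 0 := hy
  have h1 : (labs x + labs y) ⊓ labs g = 0 :=
    disj_add (labs_nonneg x) (labs_nonneg y) (labs_nonneg g) hx' hy'
  have h2 : (labs x + labs y + labs x) ⊓ labs g = 0 :=
    disj_add (add_nonneg (labs_nonneg x) (labs_nonneg y)) (labs_nonneg x)
      (labs_nonneg g) h1 hx'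
  have h3 : ((labs x + labs y + labs x) + (labs x + labs y + labs x)) ⊓ labs g = 0 :=
    disj_add (add_nonneg (add_nonneg (labs_nonneg x) (labs_nonneg y)) (labs_nonneg x))
      (add_nonneg (add_nonneg (labs_nonneg x) (labs_nonneg y)) (labs_nonneg x))
      (labs_nonneg g) h2 h2
  exact disj_of_le (labs_nonneg _) (labs_nonneg g) (labs_add_le x y) h3

lemma zero_mem_biPolar (g : G) : (0:G) ∈ biPolar g := by
  intro k _
  rw [labs_zero]
  exact inf_eq_left.mpr (labs_nonneg k)

lemma biPolar_neg_mem {g x : G} (hx : x ∈ biPolar g) : -x ∈ biPolar g := by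
  intro k hk
  rw [labs_neg]
  exact hx k hk

lemma biPolar_add_mem {g x y : G} (hx : x ∈ biPolar g) (hy : y ∈ biPolar g) :
    x + y ∈ biPolar g := by
  intro k hk
  have hx' := hx k hk
  have hy' := hy k hk
  have h1 : (labs x + labs y) ⊓ labs k = 0 :=
    disj_add (labs_nonneg x) (labs_nonneg y) (labs_nonneg k) hx' hy'
  have h2 : (labs x + labs y + labs x) ⊓ labs k = 0 :=
    disj_add (add_nonneg (labs_nonneg x) (labs_nonneg y)) (labs_nonneg x)
      (labs_nonneg k) h1 hx'
  have h3 : ((labs x + labs y + labs x) + (labs x + labs y + labs x)) ⊓ labs k = 0 :=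
    disj_add (add_nonneg (add_nonneg (labs_nonneg x) (labs_nonneg y)) (labs_nonneg x))
      (add_nonneg (add_nonneg (labs_nonneg x) (labs_nonneg y)) (labs_nonneg x))
      (labs_nonneg k) h2 h2
  exact disj_of_le (labs_nonneg _) (labs_nonneg k) (labs_add_le x y) h3

lemma biPolar_solid {g z x : G} (hz : 0 ≤ z) (hle : z ≤ labs x)
    (hx : x ∈ biPolar g) : z ∈ biPolar g := by
  intro k hk
  rw [labs_of_nonneg hz]
  exact disj_of_le hz (labs_nonneg k) hle (hx k hk)

lemma nsmul_le_mem_biPolar {g u : G} (hu : 0 ≤ u) {n : ℕ} (hle : u ≤ n • labs g) :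
    u ∈ biPolar g := by
  intro k hk
  rw [labs_of_nonneg hu]
  have h1 : labs k ⊓ labs g = 0 := hk
  have h2 : labs k ⊓ (n • labs g) = 0 :=
    disj_nsmul (labs_nonneg k) (labs_nonneg g) h1 n
  have h3 : (n • labs g) ⊓ labs k = 0 := by rw [inf_comm]; exact h2
  exact disj_of_le hu (labs_nonneg k) hle h3

lemma commute_neg_left {x y : G} (h : x + y = y + x) : -x + y = y + -x := by
  have h1 : -x + (y + x) + -x = -x + (x + y) + -x := by rw [h]
  have e1 : -x + (y + x) + -x = -x + y := by
    rw [add_assoc, add_assoc, add_neg_cancel, add_zero]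
  have e2 : -x + (x + y) + -x = y + -x := by
    rw [← add_assoc, neg_add_cancel, zero_add]
  rw [e1, e2] at h1
  exact h1

lemma commute_add_left {x y z : G} (h1 : x + z = z + x) (h2 : y + z = z + y) :
    (x + y) + z = z + (x + y) := by
  calc (x + y) + z = x + (y + z) := add_assoc ..
  _ = x + (z + y) := by rw [h2]
  _ = (x + z) + y := (add_assoc ..).symm
  _ = (z + x) + y := by rw [h1]
  _ = z + (x + y) := add_assoc ..

lemma commute_of_labs_disj {z w : G} (h : labs z ⊓ labs w = 0) : z + w = w + z := by
  have base : ∀ p q : G, 0 ≤ p → 0 ≤ q → p ≤ labs z → q ≤ labs w → p + q = q + p := by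
    intro p q hp hq hpz hqw
    apply add_comm_of_disj
    refine le_antisymm ?_ (le_inf hp hq)
    exact le_trans (inf_le_inf hpz hqw) h.le
  have hP1 : (z ⊔ 0) ≤ labs z := le_add_of_nonneg_right le_sup_right
  have hP2 : ((-z) ⊔ 0) ≤ labs z := le_add_of_nonneg_left le_sup_right
  have hQ1 : (w ⊔ 0) ≤ labs w := le_add_of_nonneg_right le_sup_right
  have hQ2 : ((-w) ⊔ 0) ≤ labs w := le_add_of_nonneg_left le_sup_right
  have c11 := base _ _ le_sup_right le_sup_right hP1 hQ1
  have c12 := base _ _ le_sup_right le_sup_right hP1 hQ2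
  have c21 := base _ _ le_sup_right le_sup_right hP2 hQ1
  have c22 := base _ _ le_sup_right le_sup_right hP2 hQ2
  -- X := z⁺ - z⁻ = z commutes with Q1 and Q2
  have zc1 : ((z ⊔ 0) + -((-z) ⊔ 0)) + (w ⊔ 0) = (w ⊔ 0) + ((z ⊔ 0) + -((-z) ⊔ 0)) :=
    commute_add_left c11 (commute_neg_left c21)
  have zc2 : ((z ⊔ 0) + -((-z) ⊔ 0)) + ((-w) ⊔ 0) = ((-w) ⊔ 0) + ((z ⊔ 0) + -((-z) ⊔ 0)) :=
    commute_add_left c12 (commute_neg_left c22)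
  have final : ((w ⊔ 0) + -((-w) ⊔ 0)) + ((z ⊔ 0) + -((-z) ⊔ 0))
      = ((z ⊔ 0) + -((-z) ⊔ 0)) + ((w ⊔ 0) + -((-w) ⊔ 0)) :=
    commute_add_left zc1.symm (commute_neg_left zc2.symm)
  have ez : (z ⊔ 0) + -((-z) ⊔ 0) = z := by
    have := eq_pos_sub_neg z; rwa [sub_eq_add_neg] at this
  have ew : (w ⊔ 0) + -((-w) ⊔ 0) = w := by
    have := eq_pos_sub_neg w; rwa [sub_eq_add_neg] at this
  rw [ez, ew] at final
  exact final.symm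

end Polar
section Forward
variable {G : Type u} [Lattice G] [AddGroup G]
  [CovariantClass G G (· + ·) (· ≤ ·)]
  [CovariantClass G G (Function.swap (· + ·)) (· ≤ ·)]

/-- decomposition of a nonnegative element relative to `g`. -/
lemma decomp_nonneg (hG : Hyperarchimedean G) (g : G) {x : G} (hx : 0 ≤ x) :
    ∃ u v : G, 0 ≤ u ∧ 0 ≤ v ∧ (∃ n : ℕ, u ≤ n • labs g) ∧ labs v ⊓ labs g = 0
      ∧ x = u + v := by
  obtain ⟨n, hn⟩ := stab hG (labs_nonneg g) hx
  set u := x ⊓ (n • labs g) with hu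
  have hu0 : 0 ≤ u := le_inf hx (nsmul_nonneg' (labs_nonneg g) n)
  have hv0 : 0 ≤ -u + x := by
    have := add_le_add_right (inf_le_left : u ≤ x) (-u)
    rwa [neg_add_cancel] at this
  refine ⟨u, -u + x, hu0, hv0, ⟨n, inf_le_right⟩, ?_, (add_neg_cancel_left u x).symm⟩
  rw [labs_of_nonneg hv0, inf_comm]
  exact hn

lemma martinez_of_hyper (hG : Hyperarchimedean G) : Martinez G := by
  intro H hco
  refine ⟨hco, ?_⟩
  intro h hH x hx
  obtain ⟨h0, hneg, hadd, hsupc, _hinfc, hconv⟩ := hco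
  have hhp : h ⊔ 0 ∈ H := hsupc h hH 0 h0
  have hhn : -h ⊔ 0 ∈ H := hsupc (-h) (hneg h hH) 0 h0
  have hlabs : labs h ∈ H := hadd _ hhp _ hhn
  have hnsmul : ∀ n : ℕ, n • labs h ∈ H := by
    intro n
    induction n with
    | zero => rw [zero_nsmul]; exact h0
    | succ k ih => rw [succ_nsmul]; exact hadd _ ih _ hlabs
  have key : ∀ z : G, 0 ≤ z → z ∈ biPolar h → z ∈ H := by
    intro z hz hzb
    obtain ⟨u, v, hu0, hv0, ⟨n, hun⟩, hvp, hzuv⟩ := decomp_nonneg hG h hz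
    have hub : u ∈ biPolar h := nsmul_le_mem_biPolar hu0 hun
    have hvb : v ∈ biPolar h := by
      have : v = -u + z := by
        rw [hzuv, ← add_assoc, neg_add_cancel, zero_add]
      rw [this]
      exact biPolar_add_mem (biPolar_neg_mem hub) hzb
    have hv0' : v = 0 := by
      have h2 := hvb v hvp
      rw [inf_idem] at h2
      exact labs_eq_zero h2
    have hzu : z = u := by rw [hzuv, hv0', add_zero]
    rw [hzu]
    exact hconv 0 h0 _ (hnsmul n) u hu0 hun
  have hxpos : x ⊔ 0 ∈ H := key _ le_sup_right
    (biPolar_solid le_sup_right (le_add_of_nonneg_right le_sup_right) hx)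
  have hxneg : (-x) ⊔ 0 ∈ H := key _ le_sup_right
    (biPolar_solid le_sup_right (le_add_of_nonneg_left le_sup_right) hx)
  have ex : x = (x ⊔ 0) + -((-x) ⊔ 0) := by
    have := eq_pos_sub_neg x; rw [sub_eq_add_neg] at this; exact this.symm
  rw [ex]
  exact hadd _ hxpos _ (hneg _ hxneg)

lemma projectable_of_hyper (hG : Hyperarchimedean G) : Projectable G := by
  intro g
  constructor
  · intro x
    obtain ⟨u1, v1, hu10, hv10, ⟨n1, hun1⟩, hvp1, he1⟩ :=
      decomp_nonneg hG g (le_sup_right : (0:G) ≤ x ⊔ 0)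
    obtain ⟨u2, v2, hu20, hv20, ⟨n2, hun2⟩, hvp2, he2⟩ :=
      decomp_nonneg hG g (le_sup_right : (0:G) ≤ (-x) ⊔ 0)
    have hu1b : u1 ∈ biPolar g := nsmul_le_mem_biPolar hu10 hun1
    have hu2b : u2 ∈ biPolar g := nsmul_le_mem_biPolar hu20 hun2
    have hv1p : v1 ∈ polar g := hvp1
    have hv2p : v2 ∈ polar g := hvp2
    refine ⟨u1 + -u2, biPolar_add_mem hu1b (biPolar_neg_mem hu2b),
      v1 + -v2, polar_add_mem hv1p (polar_neg_mem hv2p), ?_⟩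
    -- x = (u1 + v1) + -(u2 + v2) = (u1 - u2) + (v1 - v2)
    have hcomm : (v1 + -v2) + -u2 = -u2 + (v1 + -v2) := by
      have hd : labs (v1 + -v2) ⊓ labs u2 = 0 := by
        have hm : v1 + -v2 ∈ polar g := polar_add_mem hv1p (polar_neg_mem hv2p)
        have := hu2b _ hm
        rw [inf_comm]
        exact this
      exact (commute_neg_left (commute_of_labs_disj hd).symm).symm
    have ex : x = (x ⊔ 0) + -((-x) ⊔ 0) := by
      have := eq_pos_sub_neg x; rw [sub_eq_add_neg] at this; exact this.symm
    rw [ex, he1, he2, neg_add_rev]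
    calc (u1 + v1) + (-v2 + -u2) = u1 + ((v1 + -v2) + -u2) := by
          simp only [add_assoc]
    _ = u1 + (-u2 + (v1 + -v2)) := by rw [hcomm]
    _ = (u1 + -u2) + (v1 + -v2) := by simp only [add_assoc]
  · apply Set.eq_singleton_iff_unique_mem.mpr
    constructor
    · exact ⟨zero_mem_biPolar g, zero_mem_polar g⟩
    · rintro z ⟨hz1, hz2⟩
      have hz := hz1 z hz2
      rw [inf_idem] at hz
      exact labs_eq_zero hz

end Forward
section Backward
variable {G : Type u} [Lattice G] [AddGroup G]
  [CovariantClass G G (· + ·) (· ≤ ·)]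
  [CovariantClass G G (Function.swap (· + ·)) (· ≤ ·)]

lemma hyper_of_proj_mart (hp : Projectable G) (hm : Martinez G) :
    Hyperarchimedean G := by
  intro H iH1 iH2 iH3 iH4 f hsurj hadd hsup hinf
  have hf0 : f 0 = 0 := by
    have h1 : f 0 = f 0 + f 0 := by
      have := hadd 0 0; rw [add_zero] at this; exact this
    have := left_eq_add.mp h1
    exact this
  have hfneg : ∀ x : G, f (-x) = -f x := by
    intro x
    have h1 := hadd x (-x)
    rw [add_neg_cancel, hf0] at h1
    exact (neg_eq_of_add_eq_zero_right h1.symm).symm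
  have hfmono : ∀ {x y : G}, x ≤ y → f x ≤ f y := by
    intro x y h
    have e : x ⊔ y = y := sup_eq_right.mpr h
    have h2 := hsup x y
    rw [e] at h2
    calc f x ≤ f x ⊔ f y := le_sup_left
    _ = f y := h2.symm
  have hflabs : ∀ x : G, f (labs x) = labs (f x) := by
    intro x
    show f ((x ⊔ 0) + ((-x) ⊔ 0)) = (f x ⊔ 0) + ((-(f x)) ⊔ 0)
    rw [hadd, hsup, hsup, hfneg, hf0]
  have hfnsmul : ∀ (x : G) (n : ℕ), f (n • x) = n • f x := by
    intro x n
    induction n with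
    | zero => rw [zero_nsmul, zero_nsmul]; exact hf0
    | succ k ih => rw [succ_nsmul, succ_nsmul, hadd, ih]
  intro α β hα hβ hn
  obtain ⟨x0, hx0⟩ := hsurj α
  obtain ⟨y0, hy0⟩ := hsurj β
  have hfx : f (x0 ⊔ 0) = α := by rw [hsup, hx0, hf0]; exact sup_eq_left.mpr hα
  have hfy : f (y0 ⊔ 0) = β := by rw [hsup, hy0, hf0]; exact sup_eq_left.mpr hβ
  set x := x0 ⊔ 0 with hxdef
  set y := y0 ⊔ 0 with hydef
  have hx : (0:G) ≤ x := le_sup_right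
  -- the convex ℓ-subgroup S of elements bounded by multiples of labs x
  set S : Set G := {z | ∃ n : ℕ, labs z ≤ n • labs x} with hSdef
  have hS : IsConvexLSubgroup S := by
    refine ⟨⟨0, by rw [labs_zero, zero_nsmul]⟩, ?_, ?_, ?_, ?_, ?_⟩
    · rintro z ⟨n, hz⟩
      exact ⟨n, by rwa [labs_neg]⟩
    · rintro z1 ⟨n1, h1⟩ z2 ⟨n2, h2⟩
      refine ⟨(n1 + n2 + n1) + (n1 + n2 + n1), ?_⟩
      have hC : labs z1 + labs z2 + labs z1 ≤ (n1 + n2 + n1) • labs x := by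
        rw [add_nsmul, add_nsmul]
        exact add_le_add (add_le_add h1 h2) h1
      calc labs (z1 + z2) ≤ (labs z1 + labs z2 + labs z1) + (labs z1 + labs z2 + labs z1) :=
            labs_add_le z1 z2
      _ ≤ (n1 + n2 + n1) • labs x + (n1 + n2 + n1) • labs x := add_le_add hC hC
      _ = ((n1 + n2 + n1) + (n1 + n2 + n1)) • labs x := (add_nsmul _ _ _).symm
    · rintro z1 ⟨n1, h1⟩ z2 ⟨n2, h2⟩
      refine ⟨(n1 + n2) + (n1 + n2), ?_⟩
      have hC1 : labs z1 ≤ (n1 + n2) • labs x := by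
        rw [add_nsmul]
        exact le_trans h1 (le_add_of_nonneg_right (nsmul_nonneg' (labs_nonneg x) n2))
      have hC2 : labs z2 ≤ (n1 + n2) • labs x := by
        rw [add_nsmul]
        exact le_trans h2 (le_add_of_nonneg_left (nsmul_nonneg' (labs_nonneg x) n1))
      have u1 : z1 ⊔ z2 ≤ (n1 + n2) • labs x :=
        sup_le (le_trans (le_labs z1) hC1) (le_trans (le_labs z2) hC2)
      have u2 : -(z1 ⊔ z2) ≤ (n1 + n2) • labs x := by
        rw [neg_sup]
        exact le_trans inf_le_left (le_trans (lneg_le_labs z1) hC1)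
      calc labs (z1 ⊔ z2) ≤ (n1+n2) • labs x + (n1+n2) • labs x := labs_le_of u1 u2
      _ = ((n1+n2)+(n1+n2)) • labs x := (add_nsmul _ _ _).symm
    · rintro z1 ⟨n1, h1⟩ z2 ⟨n2, h2⟩
      refine ⟨(n1 + n2) + (n1 + n2), ?_⟩
      have hC1 : labs z1 ≤ (n1 + n2) • labs x := by
        rw [add_nsmul]
        exact le_trans h1 (le_add_of_nonneg_right (nsmul_nonneg' (labs_nonneg x) n2))
      have hC2 : labs z2 ≤ (n1 + n2) • labs x := by
        rw [add_nsmul]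
        exact le_trans h2 (le_add_of_nonneg_left (nsmul_nonneg' (labs_nonneg x) n1))
      have u1 : z1 ⊓ z2 ≤ (n1 + n2) • labs x :=
        le_trans inf_le_left (le_trans (le_labs z1) hC1)
      have u2 : -(z1 ⊓ z2) ≤ (n1 + n2) • labs x := by
        rw [neg_inf]
        exact sup_le (le_trans (lneg_le_labs z1) hC1) (le_trans (lneg_le_labs z2) hC2)
      calc labs (z1 ⊓ z2) ≤ (n1+n2) • labs x + (n1+n2) • labs x := labs_le_of u1 u2
      _ = ((n1+n2)+(n1+n2)) • labs x := (add_nsmul _ _ _).symm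
    · rintro z1 ⟨n1, h1⟩ z2 ⟨n2, h2⟩ w hw1 hw2
      refine ⟨(n1 + n2) + (n1 + n2), ?_⟩
      have hC1 : labs z1 ≤ (n1 + n2) • labs x := by
        rw [add_nsmul]
        exact le_trans h1 (le_add_of_nonneg_right (nsmul_nonneg' (labs_nonneg x) n2))
      have hC2 : labs z2 ≤ (n1 + n2) • labs x := by
        rw [add_nsmul]
        exact le_trans h2 (le_add_of_nonneg_left (nsmul_nonneg' (labs_nonneg x) n1))
      have u1 : w ≤ (n1 + n2) • labs x := le_trans hw2 (le_trans (le_labs z2) hC2)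
      have u2 : -w ≤ (n1 + n2) • labs x :=
        le_trans (lneg_le hw1) (le_trans (lneg_le_labs z1) hC1)
      calc labs w ≤ (n1+n2) • labs x + (n1+n2) • labs x := labs_le_of u1 u2
      _ = ((n1+n2)+(n1+n2)) • labs x := (add_nsmul _ _ _).symm
  have hxS : x ∈ S := ⟨1, by rw [one_nsmul]⟩
  have hdS : biPolar x ⊆ S := (hm S hS).2 x hxS
  obtain ⟨hdecomp, _⟩ := hp x
  obtain ⟨u, hu, v, hv, hxy⟩ := hdecomp y
  obtain ⟨n, hnle⟩ := hdS hu
  have hlabsx : labs x = x := labs_of_nonneg hx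
  have hfu : f u ≤ n • α := by
    have h1 : f u ≤ f (labs u) := hfmono (le_labs u)
    have h2 : f (labs u) ≤ f (n • labs x) := hfmono hnle
    have h3 : f (n • labs x) = n • α := by
      rw [hfnsmul, hflabs, hfx, labs_of_nonneg hα]
    exact le_trans h1 (le_trans h2 h3.le)
  have hfv : labs (f v) ⊓ α = 0 := by
    have h1 : labs v ⊓ labs x = 0 := hv
    have h2 := hinf (labs v) (labs x)
    rw [h1, hf0] at h2
    rw [hflabs, hflabs, hfx, labs_of_nonneg hα] at h2
    exact h2.symm
  have hbeta : β = f u + f v := by rw [← hfy, hxy]; exact hadd u v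
  have hble : β ≤ n • α + labs (f v) := by
    rw [hbeta]
    exact add_le_add hfu (le_labs (f v))
  have hsucc : n • α + α ≤ n • α + labs (f v) := by
    have := le_trans (hn (n+1)) hble
    rwa [succ_nsmul] at this
  have hαle : α ≤ labs (f v) := ladd_cancel_le hsucc
  have h3 : α ⊓ labs (f v) = α := inf_eq_left.mpr hαle
  rw [← h3, inf_comm]
  exact hfv

end Backward


/-- `G` is hyperarchimedean iff `G` is projectable and Martínez. -/
theorem stmt_9 {G : Type u} [Lattice G] [AddGroup G]
    [CovariantClass G G (· + ·) (· ≤ ·)]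
    [CovariantClass G G (Function.swap (· + ·)) (· ≤ ·)] :
    Hyperarchimedean G ↔ (Projectable G ∧ Martinez G) := by
  constructor
  · intro hG
    exact ⟨projectable_of_hyper hG, martinez_of_hyper hG⟩
  · rintro ⟨hp, hm⟩
    exact hyper_of_proj_mart hp hm
end

section
/- Let G be an abelian Martínez ℓ-group and let 0 ≤ x ∈ G. Then the quotient ℓ-group G/G(x) is a Martínez ℓ-group. -/
/-- The quotient ℓ-group `G/H` (for `H` a convex ℓ-subgroup of the abelian
ℓ-group `G`) is a Martínez ℓ-group, expressed at the level of `G`: convex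
ℓ-subgroups of `G/H` correspond to convex ℓ-subgroups `K ⊇ H` of `G`, and the
double polar of `h + H` in `G/H` pulls back to
`{g : ∀ k, |k| ⊓ |h| ∈ H → |g| ⊓ |k| ∈ H}`. -/
def MartinezQuot {G : Type*} [Lattice G] [AddGroup G] (H : Set G) : Prop :=
  ∀ K : Set G, IsConvexLSubgroup K → H ⊆ K →
    ∀ h ∈ K, ∀ g : G, (∀ k : G, labs k ⊓ labs h ∈ H → labs g ⊓ labs k ∈ H) → g ∈ K

section Aux

variable {G : Type*} [Lattice G] [AddCommGroup G]
    [CovariantClass G G (· + ·) (· ≤ ·)]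
    [CovariantClass G G (Function.swap (· + ·)) (· ≤ ·)]

lemma labs_eq_abs (g : G) : labs g = |g| := by
  rw [labs, ← posPart_def, ← negPart_def, posPart_add_negPart]

/-- if `a ⊓ b = 0` and `a ⊓ c = 0` (everything nonneg), then `a ⊓ (b + c) = 0`. -/
lemma inf_add_eq_zero {a b c : G} (ha : 0 ≤ a) (hb : 0 ≤ b) (hc : 0 ≤ c)
    (h1 : a ⊓ b = 0) (h2 : a ⊓ c = 0) : a ⊓ (b + c) = 0 := by
  have key : a ⊓ (b + c) ≤ (a ⊓ b) + (a ⊓ c) := by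
    rw [inf_add, add_inf, add_inf]
    refine le_inf (le_inf ?_ ?_) (le_inf ?_ ?_)
    · exact inf_le_left.trans (le_add_of_nonneg_right ha)
    · exact inf_le_left.trans (le_add_of_nonneg_right hc)
    · exact inf_le_left.trans (le_add_of_nonneg_left hb)
    · exact inf_le_right
  rw [h1, h2, add_zero] at key
  exact le_antisymm key (le_inf ha (add_nonneg hb hc))

lemma inf_nsmul_eq_zero {a x : G} (ha : 0 ≤ a) (hx : 0 ≤ x)
    (h : a ⊓ x = 0) : ∀ n : ℕ, a ⊓ n • x = 0
  | 0 => by rw [zero_nsmul]; exact inf_eq_right.2 ha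
  | (n + 1) => by
      rw [succ_nsmul]
      exact inf_add_eq_zero ha (nsmul_nonneg hx n) hx (inf_nsmul_eq_zero ha hx h n) h

/-- every element of `G(x)` is bounded by some `n • x` (for `0 ≤ x`). -/
lemma mem_principalCLS_bound {x : G} (hx : 0 ≤ x) {y : G}
    (hy : y ∈ principalCLS x) : ∃ n : ℕ, |y| ≤ n • x := by
  set S : Set G := {y : G | ∃ n : ℕ, |y| ≤ n • x} with hS
  have habs_le : ∀ a b g : G, a ≤ g → g ≤ b → |g| ≤ |a| + |b| := by
    intro a b g h1 h2
    refine abs_le'.2 ⟨h2.trans ((le_abs_self b).trans (le_add_of_nonneg_left (abs_nonneg a))), ?_⟩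
    have h3 : -g ≤ -a := neg_le_neg_iff.2 h1
    exact h3.trans ((neg_le_abs a).trans (le_add_of_nonneg_right (abs_nonneg b)))
  have hconvS : IsConvexLSubgroup S := by
    refine ⟨⟨0, by simp⟩, ?_, ?_, ?_, ?_, ?_⟩
    · rintro a ⟨n, hn⟩; exact ⟨n, by rwa [abs_neg]⟩
    · rintro a ⟨m, hm⟩ b ⟨n, hn⟩
      exact ⟨m + n, ((abs_add_le a b).trans (add_le_add hm hn)).trans_eq (add_nsmul x m n).symm⟩
    · rintro a ⟨m, hm⟩ b ⟨n, hn⟩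
      refine ⟨m + n, ?_⟩
      have : |a ⊔ b| ≤ |a| + |b| := by
        refine abs_le'.2 ⟨sup_le ?_ ?_, ?_⟩
        · exact (le_abs_self a).trans (le_add_of_nonneg_right (abs_nonneg b))
        · exact (le_abs_self b).trans (le_add_of_nonneg_left (abs_nonneg a))
        · rw [neg_sup]
          exact inf_le_left.trans ((neg_le_abs a).trans
            (le_add_of_nonneg_right (abs_nonneg b)))
      exact (this.trans (add_le_add hm hn)).trans_eq (add_nsmul x m n).symm
    · rintro a ⟨m, hm⟩ b ⟨n, hn⟩
      refine ⟨m + n, ?_⟩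
      have : |a ⊓ b| ≤ |a| + |b| := by
        refine abs_le'.2 ⟨?_, ?_⟩
        · exact inf_le_left.trans ((le_abs_self a).trans
            (le_add_of_nonneg_right (abs_nonneg b)))
        · rw [neg_inf]
          refine sup_le ((neg_le_abs a).trans (le_add_of_nonneg_right (abs_nonneg b)))
            ((neg_le_abs b).trans (le_add_of_nonneg_left (abs_nonneg a)))
      exact (this.trans (add_le_add hm hn)).trans_eq (add_nsmul x m n).symm
    · rintro a ⟨m, hm⟩ b ⟨n, hn⟩ g h1 h2
      refine ⟨m + n, ?_⟩
      have : |g| ≤ |a| + |b| := habs_le a b g h1 h2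
      exact (this.trans (add_le_add hm hn)).trans_eq (add_nsmul x m n).symm
  have hxS : x ∈ S := ⟨1, by rw [abs_of_nonneg hx, one_nsmul]⟩
  exact hy S hconvS hxS

end Aux

/-- if `G` is an abelian Martínez ℓ-group and `0 ≤ x ∈ G`, then
the quotient ℓ-group `G/G(x)` is a Martínez ℓ-group. -/
theorem stmt_12 {G : Type*} [Lattice G] [AddCommGroup G]
    [CovariantClass G G (· + ·) (· ≤ ·)]
    [CovariantClass G G (Function.swap (· + ·)) (· ≤ ·)]
    (hM : Martinez G) (x : G) (hx : 0 ≤ x) :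
    MartinezQuot (principalCLS x) := by
  intro K hK hHK h hh g hg
  obtain ⟨hK0, hKneg, hKadd, hKsup, hKinf, hKconv⟩ := hK
  -- `x ∈ K`
  have hxK : x ∈ K := hHK (fun H hH hxH => hxH)
  -- `|h| ∈ K`
  have habsh : |h| ∈ K := by
    rw [← labs_eq_abs, labs]
    exact hKadd _ (hKsup _ hh _ hK0) _ (hKsup _ (hKneg _ hh) _ hK0)
  -- the element `|h| ⊔ x ∈ K`
  have hmem : |h| ⊔ x ∈ K := hKsup _ habsh _ hxK
  have h0 : (0 : G) ≤ |h| ⊔ x := (abs_nonneg h).trans le_sup_left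
  -- `|g|` belongs to the double polar of `|h| ⊔ x`
  have hbi : |g| ∈ biPolar (|h| ⊔ x) := by
    intro k hk
    rw [polar, Set.mem_setOf_eq, labs_eq_abs, labs_eq_abs, abs_of_nonneg h0] at hk
    rw [labs_eq_abs, labs_eq_abs, abs_abs]
    have hk0 : (0 : G) ≤ |k| := abs_nonneg k
    -- from `|k| ⊓ (|h| ⊔ x) = 0` we get both `|k| ⊓ |h| = 0` and `|k| ⊓ x = 0`
    have hk1 : |k| ⊓ |h| = 0 := le_antisymm
      (hk ▸ inf_le_inf_left |k| le_sup_left) (le_inf hk0 (abs_nonneg h))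
    have hk2 : |k| ⊓ x = 0 := le_antisymm
      (hk ▸ inf_le_inf_left |k| le_sup_right) (le_inf hk0 hx)
    -- apply the hypothesis on `g` with this `k`
    have hgH : labs g ⊓ labs k ∈ principalCLS x := by
      refine hg k ?_
      rw [labs_eq_abs, labs_eq_abs, hk1]
      exact fun H hH _ => hH.1
    rw [labs_eq_abs, labs_eq_abs] at hgH
    set b : G := |g| ⊓ |k| with hb
    have hb0 : (0 : G) ≤ b := le_inf (abs_nonneg g) (abs_nonneg k)
    obtain ⟨n, hn⟩ := mem_principalCLS_bound hx hgH
    rw [abs_of_nonneg hb0] at hn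
    have hbx : b ⊓ x = 0 := le_antisymm
      (hk2 ▸ inf_le_inf_right x (inf_le_right : b ≤ |k|)) (le_inf hb0 hx)
    have : b ⊓ n • x = 0 := inf_nsmul_eq_zero hb0 hx hbx n
    rw [← this, inf_eq_left.2 hn]
  -- `K` is a d-subgroup, hence `|g| ∈ K`
  have habsg : |g| ∈ K :=
    (hM K ⟨hK0, hKneg, hKadd, hKsup, hKinf, hKconv⟩).2 _ hmem hbi
  -- finally, `g ∈ K` by convexity
  exact hKconv _ (hKneg _ habsg) _ habsg g (neg_le.2 (neg_le_abs g)) (le_abs_self g)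
end

section
/- Let G be an abelian Martínez ℓ-group and let x,y ∈ G with x ∧ y = 0. Then the convex ℓ-subgroup G(x) ∨ G(y) (the join of G(x) and G(y) in the lattice of convex ℓ-subgroups of G, i.e., the smallest convex ℓ-subgroup containing both), regarded as an ℓ-group, is a Martínez ℓ-group. -/
/-- An ℓ-subgroup of `G`: a subgroup that is also a sublattice. -/
def IsLSubgroup {G : Type*} [Lattice G] [AddGroup G] (H : Set G) : Prop :=
  (0 : G) ∈ H ∧ (∀ a ∈ H, -a ∈ H) ∧ (∀ a ∈ H, ∀ b ∈ H, a + b ∈ H) ∧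
  (∀ a ∈ H, ∀ b ∈ H, a ⊔ b ∈ H) ∧ (∀ a ∈ H, ∀ b ∈ H, a ⊓ b ∈ H)

/-- `K` is a convex ℓ-subgroup of the ℓ-group `H` (an ℓ-subgroup of `G`),
with convexity relative to `H`. -/
def IsConvexLSubgroupIn {G : Type*} [Lattice G] [AddGroup G] (H K : Set G) : Prop :=
  K ⊆ H ∧ (0 : G) ∈ K ∧ (∀ a ∈ K, -a ∈ K) ∧ (∀ a ∈ K, ∀ b ∈ K, a + b ∈ K) ∧
  (∀ a ∈ K, ∀ b ∈ K, a ⊔ b ∈ K) ∧ (∀ a ∈ K, ∀ b ∈ K, a ⊓ b ∈ K) ∧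
  (∀ a ∈ K, ∀ b ∈ K, ∀ g ∈ H, a ≤ g → g ≤ b → g ∈ K)

/-- The polar of `g` computed inside the ℓ-subgroup `H` of `G`. -/
def polarIn {G : Type*} [Lattice G] [AddGroup G] (H : Set G) (g : G) : Set G :=
  {h ∈ H | labs h ⊓ labs g = 0}

/-- The double polar of `g` computed inside the ℓ-subgroup `H` of `G`. -/
def biPolarIn {G : Type*} [Lattice G] [AddGroup G] (H : Set G) (g : G) : Set G :=
  {h ∈ H | ∀ k ∈ polarIn H g, labs h ⊓ labs k = 0}

/-- The ℓ-subgroup `H` of `G`, regarded as an ℓ-group in its own right, is a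
Martínez ℓ-group: every convex ℓ-subgroup of `H` is a d-subgroup of `H`. -/
def MartinezIn {G : Type*} [Lattice G] [AddGroup G] (H : Set G) : Prop :=
  ∀ K : Set G, IsConvexLSubgroupIn H K → ∀ h ∈ K, biPolarIn H h ⊆ K

/-- The smallest convex ℓ-subgroup of `G` containing the set `S`; for
`S = G(x) ∪ G(y)` this is the join `G(x) ∨ G(y)` in the lattice of convex
ℓ-subgroups of `G`. -/
def clsGen {G : Type*} [Lattice G] [AddGroup G] (S : Set G) : Set G :=
  {x : G | ∀ K : Set G, IsConvexLSubgroup K → S ⊆ K → x ∈ K}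

lemma labs_nonneg' {G : Type*} [Lattice G] [AddGroup G]
    [CovariantClass G G (· + ·) (· ≤ ·)]
    [CovariantClass G G (Function.swap (· + ·)) (· ≤ ·)] (g : G) : 0 ≤ labs g :=
  add_nonneg le_sup_right le_sup_right

lemma labs_of_nonneg' {G : Type*} [Lattice G] [AddGroup G]
    [CovariantClass G G (· + ·) (· ≤ ·)]
    [CovariantClass G G (Function.swap (· + ·)) (· ≤ ·)] {m : G} (hm : 0 ≤ m) :
    labs m = m := by
  unfold labs
  rw [sup_eq_left.mpr hm, sup_eq_right.mpr (neg_nonpos.mpr hm), add_zero]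

lemma labs_mem' {G : Type*} [Lattice G] [AddGroup G] {H : Set G}
    (hH : IsConvexLSubgroup H) {k : G} (hk : k ∈ H) : labs k ∈ H := by
  obtain ⟨h0, hneg, hadd, hsup, hinf, hconv⟩ := hH
  exact hadd _ (hsup _ hk _ h0) _ (hsup _ (hneg _ hk) _ h0)

lemma clsGen_isCLS {G : Type*} [Lattice G] [AddGroup G] (S : Set G) :
    IsConvexLSubgroup (clsGen S) := by
  refine ⟨fun K hK _ => hK.1,
    fun a ha K hK hS => hK.2.1 _ (ha K hK hS),
    fun a ha b hb K hK hS => hK.2.2.1 _ (ha K hK hS) _ (hb K hK hS),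
    fun a ha b hb K hK hS => hK.2.2.2.1 _ (ha K hK hS) _ (hb K hK hS),
    fun a ha b hb K hK hS => hK.2.2.2.2.1 _ (ha K hK hS) _ (hb K hK hS),
    fun a ha b hb g h1 h2 K hK hS => hK.2.2.2.2.2 _ (ha K hK hS) _ (hb K hK hS) g h1 h2⟩

lemma martinezIn_of_CLS {G : Type*} [Lattice G] [AddGroup G]
    [CovariantClass G G (· + ·) (· ≤ ·)]
    [CovariantClass G G (Function.swap (· + ·)) (· ≤ ·)]
    (hM : Martinez G) {H : Set G} (hH : IsConvexLSubgroup H) : MartinezIn H := by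
  intro K hK h hh k hkbi
  obtain ⟨hKH, h0, hneg, hadd, hsup, hinf, hconv⟩ := hK
  have hKcls : IsConvexLSubgroup K := by
    refine ⟨h0, hneg, hadd, hsup, hinf, fun a ha b hb g h1 h2 => ?_⟩
    exact hconv a ha b hb g (hH.2.2.2.2.2 a (hKH ha) b (hKH hb) g h1 h2) h1 h2
  obtain ⟨hkH, hkpol⟩ := hkbi
  apply (hM K hKcls).2 h hh
  intro j hj
  -- hj : labs j ⊓ labs h = 0
  set m := labs k ⊓ labs j with hm
  have hm0 : 0 ≤ m := le_inf (labs_nonneg' k) (labs_nonneg' j)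
  have hmk : m ≤ labs k := inf_le_left
  have hmH : m ∈ H := hH.2.2.2.2.2 0 hH.1 (labs k) (labs_mem' hH hkH) m hm0 hmk
  have hlm : labs m = m := labs_of_nonneg' hm0
  have hmpol : m ∈ polarIn H h := by
    refine ⟨hmH, le_antisymm ?_ (le_inf (by rw [hlm]; exact hm0) (labs_nonneg' h))⟩
    calc labs m ⊓ labs h = (labs k ⊓ labs j) ⊓ labs h := by rw [hlm]
      _ ≤ labs j ⊓ labs h := inf_le_inf_right _ inf_le_right
      _ = 0 := hj
  have := hkpol m hmpol
  rw [hlm, inf_eq_right.mpr hmk] at this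
  exact this

/-- if `G` is an abelian Martínez ℓ-group and `x ⊓ y = 0`, then
the join `G(x) ∨ G(y)` in the lattice of convex ℓ-subgroups of `G`, regarded as
an ℓ-group, is a Martínez ℓ-group. -/
theorem stmt_13 {G : Type*} [Lattice G] [AddCommGroup G]
    [CovariantClass G G (· + ·) (· ≤ ·)]
    [CovariantClass G G (Function.swap (· + ·)) (· ≤ ·)]
    (hM : Martinez G) (x y : G) (hxy : x ⊓ y = 0) :
    MartinezIn (clsGen (principalCLS x ∪ principalCLS y)) := by
  exact martinezIn_of_CLS hM (clsGen_isCLS _)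
end
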